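/- arXiv:2105.02528 — 5 statements merged into one kernel-verified Lean document; each statement's English description precedes it below -/
import Mathlib

section
/- In a weak Hopf algebra H, the identity μ_H ∘ c_{H,H} ∘ (H ⊗ Π̄^L) ∘ δ_H = id_H holds, and likewise μ_H ∘ c_{H,H} ∘ (Π̄^R ⊗ H) ∘ δ_H = id_H. -/
open TensorProduct LinearMap

noncomputable section

namespace WK

/-- A weak bialgebra structure on a `k`-module `H`. -/
structure WeakBialgebraStr (k : Type) [CommRing k] (H : Type) [AddCommGroup H] [Module k H] :
    Type where
  mu : H ⊗[k] H →ₗ[k] H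
  one : H
  delta : H →ₗ[k] H ⊗[k] H
  eps : H →ₗ[k] k
  mul_assoc' : ∀ x y z : H, mu (mu (x ⊗ₜ[k] y) ⊗ₜ[k] z) = mu (x ⊗ₜ[k] mu (y ⊗ₜ[k] z))
  one_mul' : ∀ x : H, mu (one ⊗ₜ[k] x) = x
  mul_one' : ∀ x : H, mu (x ⊗ₜ[k] one) = x
  coassoc : ∀ x : H, rTensor H delta (delta x)
      = (TensorProduct.assoc k H H H).symm (lTensor H delta (delta x))
  counit_l : ∀ x : H, TensorProduct.lid k H (rTensor H eps (delta x)) = x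
  counit_r : ∀ x : H, TensorProduct.rid k H (lTensor H eps (delta x)) = x
  a1 : ∀ x y : H, delta (mu (x ⊗ₜ[k] y))
      = TensorProduct.map mu mu (tensorTensorTensorComm k H H H H (delta x ⊗ₜ[k] delta y))
  a2 : ∀ x y z : H, eps (mu (mu (x ⊗ₜ[k] y) ⊗ₜ[k] z))
      = LinearMap.mul' k k (TensorProduct.map (eps ∘ₗ mu)
          ((eps ∘ₗ mu) ∘ₗ (TensorProduct.comm k H H).toLinearMap)
          (tensorTensorTensorComm k H H H H ((x ⊗ₜ[k] z) ⊗ₜ[k] delta y)))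
  a2' : ∀ x y z : H, eps (mu (mu (x ⊗ₜ[k] y) ⊗ₜ[k] z))
      = LinearMap.mul' k k (TensorProduct.map (eps ∘ₗ mu)
          ((eps ∘ₗ mu) ∘ₗ (TensorProduct.comm k H H).toLinearMap)
          (tensorTensorTensorComm k H H H H
            ((x ⊗ₜ[k] z) ⊗ₜ[k] (TensorProduct.comm k H H (delta y)))))
  a3 : rTensor H delta (delta one)
      = rTensor H (lTensor H mu ∘ₗ (TensorProduct.assoc k H H H).toLinearMap)
          ((TensorProduct.assoc k (H ⊗[k] H) H H).symm (delta one ⊗ₜ[k] delta one))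
  a3' : rTensor H delta (delta one)
      = rTensor H (lTensor H (mu ∘ₗ (TensorProduct.comm k H H).toLinearMap)
            ∘ₗ (TensorProduct.assoc k H H H).toLinearMap)
          ((TensorProduct.assoc k (H ⊗[k] H) H H).symm (delta one ⊗ₜ[k] delta one))

variable {k : Type} [CommRing k] {H : Type} [AddCommGroup H] [Module k H]

namespace WeakBialgebraStr

variable (W : WeakBialgebraStr k H)

/-- `ε ∘ μ`. -/
def epsmu : H ⊗[k] H →ₗ[k] k := W.eps ∘ₗ W.mu

/-- The target map `Π^L`, `Π^L(h) = ε(1₍₁₎ h) 1₍₂₎`. -/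
def piL : H →ₗ[k] H :=
  (TensorProduct.lid k H).toLinearMap ∘ₗ rTensor H W.epsmu
    ∘ₗ (TensorProduct.assoc k H H H).symm.toLinearMap
    ∘ₗ lTensor H (TensorProduct.comm k H H).toLinearMap
    ∘ₗ (TensorProduct.assoc k H H H).toLinearMap
    ∘ₗ TensorProduct.mk k (H ⊗[k] H) H (W.delta W.one)

/-- The source map `Π^R`, `Π^R(h) = 1₍₁₎ ε(h 1₍₂₎)`. -/
def piR : H →ₗ[k] H :=
  (TensorProduct.rid k H).toLinearMap ∘ₗ lTensor H W.epsmu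
    ∘ₗ lTensor H (TensorProduct.comm k H H).toLinearMap
    ∘ₗ (TensorProduct.assoc k H H H).toLinearMap
    ∘ₗ TensorProduct.mk k (H ⊗[k] H) H (W.delta W.one)

/-- `Π̄^L(h) = 1₍₁₎ ε(1₍₂₎ h)`. -/
def pibarL : H →ₗ[k] H :=
  (TensorProduct.rid k H).toLinearMap ∘ₗ lTensor H W.epsmu
    ∘ₗ (TensorProduct.assoc k H H H).toLinearMap
    ∘ₗ TensorProduct.mk k (H ⊗[k] H) H (W.delta W.one)

/-- `Π̄^R(h) = ε(h 1₍₁₎) 1₍₂₎`. -/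
def pibarR : H →ₗ[k] H :=
  (TensorProduct.lid k H).toLinearMap ∘ₗ rTensor H W.epsmu
    ∘ₗ (TensorProduct.assoc k H H H).symm.toLinearMap
    ∘ₗ (TensorProduct.comm k (H ⊗[k] H) H).toLinearMap
    ∘ₗ TensorProduct.mk k (H ⊗[k] H) H (W.delta W.one)

end WeakBialgebraStr

/-- A weak Hopf algebra structure: a weak bialgebra with an antipode. -/
structure WeakHopfStr (k : Type) [CommRing k] (H : Type) [AddCommGroup H] [Module k H]
    extends WeakBialgebraStr k H where
  lam : H →ₗ[k] H
  antipode_r : toWeakBialgebraStr.mu ∘ₗ TensorProduct.map LinearMap.id lam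
      ∘ₗ toWeakBialgebraStr.delta = toWeakBialgebraStr.piL
  antipode_l : toWeakBialgebraStr.mu ∘ₗ TensorProduct.map lam LinearMap.id
      ∘ₗ toWeakBialgebraStr.delta = toWeakBialgebraStr.piR
  antipode_inner : toWeakBialgebraStr.mu ∘ₗ TensorProduct.map lam
      (toWeakBialgebraStr.mu ∘ₗ TensorProduct.map LinearMap.id lam
        ∘ₗ toWeakBialgebraStr.delta)
      ∘ₗ toWeakBialgebraStr.delta = lam

/-- Convolution product of two linear maps from a "coalgebra" `(X, D)` into an algebra `B`. -/
def convOn {B : Type} [Ring B] [Algebra k B] {X : Type} [AddCommGroup X] [Module k X]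
    (D : X →ₗ[k] X ⊗[k] X) (f g : X →ₗ[k] B) : X →ₗ[k] B :=
  LinearMap.mul' k B ∘ₗ TensorProduct.map f g ∘ₗ D

/-- Tensor product comultiplication. -/
def deltaT {X Y : Type} [AddCommGroup X] [Module k X] [AddCommGroup Y] [Module k Y]
    (dX : X →ₗ[k] X ⊗[k] X) (dY : Y →ₗ[k] Y ⊗[k] Y) :
    X ⊗[k] Y →ₗ[k] (X ⊗[k] Y) ⊗[k] (X ⊗[k] Y) :=
  (tensorTensorTensorComm k X X Y Y).toLinearMap ∘ₗ TensorProduct.map dX dY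

/-- Comultiplication of `H ⊗ H`. -/
def delta2 (W : WeakBialgebraStr k H) :
    H ⊗[k] H →ₗ[k] (H ⊗[k] H) ⊗[k] (H ⊗[k] H) := deltaT W.delta W.delta

/-- Comultiplication of `H ⊗ (H ⊗ H)`. -/
def delta3 (W : WeakBialgebraStr k H) :
    H ⊗[k] (H ⊗[k] H) →ₗ[k]
      (H ⊗[k] (H ⊗[k] H)) ⊗[k] (H ⊗[k] (H ⊗[k] H)) :=
  deltaT W.delta (delta2 W)

/-- Comultiplication of `H ⊗ (H ⊗ (H ⊗ H))`. -/
def delta4 (W : WeakBialgebraStr k H) :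
    H ⊗[k] (H ⊗[k] (H ⊗[k] H)) →ₗ[k]
      (H ⊗[k] (H ⊗[k] (H ⊗[k] H))) ⊗[k] (H ⊗[k] (H ⊗[k] (H ⊗[k] H))) :=
  deltaT W.delta (delta3 W)

/-- Cocommutativity of the coproduct. -/
def Cocomm (W : WeakBialgebraStr k H) : Prop :=
  ∀ x : H, TensorProduct.comm k H H (W.delta x) = W.delta x

variable {B : Type} [Ring B] [Algebra k B]

/-- A measuring of `H` on `B`. -/
def IsMeasuring (W : WeakBialgebraStr k H) (φ : H ⊗[k] B →ₗ[k] B) : Prop :=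
  ∀ (h : H) (b b' : B), φ (h ⊗ₜ[k] (b * b')) =
    LinearMap.mul' k B (TensorProduct.map φ φ
      (tensorTensorTensorComm k H H B B (W.delta h ⊗ₜ[k] (b ⊗ₜ[k] b'))))

/-- `u₁ = φ ∘ (H ⊗ η_B)`. -/
def u1 (φ : H ⊗[k] B →ₗ[k] B) : H →ₗ[k] B := φ ∘ₗ (TensorProduct.mk k H B).flip 1

/-- `u₂ = φ ∘ (μ_H ⊗ η_B)`. -/
def u2 (W : WeakBialgebraStr k H) (φ : H ⊗[k] B →ₗ[k] B) : H ⊗[k] H →ₗ[k] B :=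
  u1 φ ∘ₗ W.mu

/-- Left weak `H`-module algebra. -/
def IsWMA (W : WeakBialgebraStr k H) (φ : H ⊗[k] B →ₗ[k] B) : Prop :=
  IsMeasuring W φ ∧ (∀ b : B, φ (W.one ⊗ₜ[k] b) = b) ∧
    (∀ x y : H, u1 φ (W.mu (x ⊗ₜ[k] y)) = φ (x ⊗ₜ[k] u1 φ y))

/-- Left `H`-module algebra. -/
def IsMA (W : WeakBialgebraStr k H) (φ : H ⊗[k] B →ₗ[k] B) : Prop :=
  IsMeasuring W φ ∧ (∀ b : B, φ (W.one ⊗ₜ[k] b) = b) ∧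
    (∀ (x y : H) (b : B), φ (W.mu (x ⊗ₜ[k] y) ⊗ₜ[k] b) = φ (x ⊗ₜ[k] φ (y ⊗ₜ[k] b)))

/-- `P_{φ} = (φ ⊗ H) ∘ (H ⊗ c) ∘ (δ ⊗ B)`. -/
def Pmap (W : WeakBialgebraStr k H) (φ : H ⊗[k] B →ₗ[k] B) : H ⊗[k] B →ₗ[k] B ⊗[k] H :=
  rTensor H φ ∘ₗ (TensorProduct.assoc k H B H).symm.toLinearMap
    ∘ₗ lTensor H (TensorProduct.comm k H B).toLinearMap
    ∘ₗ (TensorProduct.assoc k H H B).toLinearMap ∘ₗ rTensor B W.delta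

/-- `F_σ = (σ ⊗ μ_H) ∘ δ_{H⊗H}`. -/
def Fmap (W : WeakBialgebraStr k H) (σ : H ⊗[k] H →ₗ[k] B) : H ⊗[k] H →ₗ[k] B ⊗[k] H :=
  TensorProduct.map σ W.mu ∘ₗ delta2 W

/-- `G_σ = (μ_H ⊗ σ) ∘ δ_{H⊗H}`. -/
def Gmap (W : WeakBialgebraStr k H) (σ : H ⊗[k] H →ₗ[k] B) : H ⊗[k] H →ₗ[k] H ⊗[k] B :=
  TensorProduct.map W.mu σ ∘ₗ delta2 W

/-- `∇_{B⊗H} = (μ_B ⊗ H) ∘ (B ⊗ ((u₁ ⊗ H) ∘ δ_H))`. -/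
def nabla (W : WeakBialgebraStr k H) (φ : H ⊗[k] B →ₗ[k] B) : B ⊗[k] H →ₗ[k] B ⊗[k] H :=
  rTensor H (LinearMap.mul' k B) ∘ₗ (TensorProduct.assoc k B B H).symm.toLinearMap
    ∘ₗ lTensor B (rTensor H (u1 φ) ∘ₗ W.delta)

/-- The twisted condition for `σ`. -/
def IsTwisted (W : WeakBialgebraStr k H) (φ : H ⊗[k] B →ₗ[k] B)
    (σ : H ⊗[k] H →ₗ[k] B) : Prop :=
  LinearMap.mul' k B ∘ₗ lTensor B σ ∘ₗ (TensorProduct.assoc k B H H).toLinearMap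
      ∘ₗ rTensor H (Pmap W φ) ∘ₗ (TensorProduct.assoc k H B H).symm.toLinearMap
      ∘ₗ lTensor H (Pmap W φ)
  = LinearMap.mul' k B ∘ₗ lTensor B φ ∘ₗ (TensorProduct.assoc k B H B).toLinearMap
      ∘ₗ rTensor B (Fmap W σ) ∘ₗ (TensorProduct.assoc k H H B).symm.toLinearMap

/-- The 2-cocycle condition for `σ`. -/
def IsCocycle (W : WeakBialgebraStr k H) (φ : H ⊗[k] B →ₗ[k] B)
    (σ : H ⊗[k] H →ₗ[k] B) : Prop :=
  LinearMap.mul' k B ∘ₗ lTensor B σ ∘ₗ (TensorProduct.assoc k B H H).toLinearMap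
      ∘ₗ rTensor H (Pmap W φ) ∘ₗ (TensorProduct.assoc k H B H).symm.toLinearMap
      ∘ₗ lTensor H (Fmap W σ)
  = LinearMap.mul' k B ∘ₗ lTensor B σ ∘ₗ (TensorProduct.assoc k B H H).toLinearMap
      ∘ₗ rTensor H (Fmap W σ) ∘ₗ (TensorProduct.assoc k H H H).symm.toLinearMap

/-- The Hom-product `φ ∧ ψ = φ ∘ (X ⊗ ψ) ∘ (D ⊗ B)`. -/
def wedgeOn {X : Type} [AddCommGroup X] [Module k X]
    (D : X →ₗ[k] X ⊗[k] X) (f g : X ⊗[k] B →ₗ[k] B) : X ⊗[k] B →ₗ[k] B :=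
  f ∘ₗ lTensor X g ∘ₗ (TensorProduct.assoc k X X B).toLinearMap ∘ₗ rTensor B D

/-- `ω̄ = μ_B ∘ (ω ⊗ B)`. -/
def wbar {X : Type} [AddCommGroup X] [Module k X] (ω : X →ₗ[k] B) : X ⊗[k] B →ₗ[k] B :=
  LinearMap.mul' k B ∘ₗ rTensor B ω

/-- `ω̄^{op} = μ_B ∘ c ∘ (ω ⊗ B)`. -/
def wbarOp {X : Type} [AddCommGroup X] [Module k X] (ω : X →ₗ[k] B) : X ⊗[k] B →ₗ[k] B :=
  LinearMap.mul' k B ∘ₗ (TensorProduct.comm k B B).toLinearMap ∘ₗ rTensor B ω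

/-- `(ω, ωi)` is a regular pair with unit `u`. -/
def RegPair {X : Type} [AddCommGroup X] [Module k X]
    (D : X →ₗ[k] X ⊗[k] X) (u ω ωi : X →ₗ[k] B) : Prop :=
  convOn D ω ωi = u ∧ convOn D ωi ω = u ∧
    convOn D (convOn D ω ωi) ω = ω ∧ convOn D (convOn D ωi ω) ωi = ωi

/-- Coface `∂_{2,0}`. -/
def cf20 (φ : H ⊗[k] B →ₗ[k] B) (σ : H ⊗[k] H →ₗ[k] B) :
    H ⊗[k] (H ⊗[k] H) →ₗ[k] B := φ ∘ₗ lTensor H σ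

/-- Coface `∂_{2,1}`. -/
def cf21 (W : WeakBialgebraStr k H) (σ : H ⊗[k] H →ₗ[k] B) :
    H ⊗[k] (H ⊗[k] H) →ₗ[k] B :=
  σ ∘ₗ rTensor H W.mu ∘ₗ (TensorProduct.assoc k H H H).symm.toLinearMap

/-- Coface `∂_{2,2}`. -/
def cf22 (W : WeakBialgebraStr k H) (σ : H ⊗[k] H →ₗ[k] B) :
    H ⊗[k] (H ⊗[k] H) →ₗ[k] B := σ ∘ₗ lTensor H W.mu

/-- Coface `∂_{2,3}`. -/
def cf23 (W : WeakBialgebraStr k H) (σ : H ⊗[k] H →ₗ[k] B) :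
    H ⊗[k] (H ⊗[k] H) →ₗ[k] B :=
  σ ∘ₗ lTensor H (W.mu ∘ₗ lTensor H W.piL)

/-- Coface `∂_{3,0}`. -/
def cf30 (φ : H ⊗[k] B →ₗ[k] B) (f : H ⊗[k] (H ⊗[k] H) →ₗ[k] B) :
    H ⊗[k] (H ⊗[k] (H ⊗[k] H)) →ₗ[k] B := φ ∘ₗ lTensor H f

/-- Coface `∂_{3,1}`. -/
def cf31 (W : WeakBialgebraStr k H) (f : H ⊗[k] (H ⊗[k] H) →ₗ[k] B) :
    H ⊗[k] (H ⊗[k] (H ⊗[k] H)) →ₗ[k] B :=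
  f ∘ₗ rTensor (H ⊗[k] H) W.mu ∘ₗ (TensorProduct.assoc k H H (H ⊗[k] H)).symm.toLinearMap

/-- Coface `∂_{3,2}`. -/
def cf32 (W : WeakBialgebraStr k H) (f : H ⊗[k] (H ⊗[k] H) →ₗ[k] B) :
    H ⊗[k] (H ⊗[k] (H ⊗[k] H)) →ₗ[k] B :=
  f ∘ₗ lTensor H (rTensor H W.mu ∘ₗ (TensorProduct.assoc k H H H).symm.toLinearMap)

/-- Coface `∂_{3,3}`. -/
def cf33 (W : WeakBialgebraStr k H) (f : H ⊗[k] (H ⊗[k] H) →ₗ[k] B) :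
    H ⊗[k] (H ⊗[k] (H ⊗[k] H)) →ₗ[k] B :=
  f ∘ₗ lTensor H (lTensor H W.mu)

/-- Coface `∂_{3,4}`. -/
def cf34 (W : WeakBialgebraStr k H) (f : H ⊗[k] (H ⊗[k] H) →ₗ[k] B) :
    H ⊗[k] (H ⊗[k] (H ⊗[k] H)) →ₗ[k] B :=
  f ∘ₗ lTensor H (lTensor H (W.mu ∘ₗ lTensor H W.piL))

/-- The pre-obstruction `ω_σ = ∂₂₀(σ) ∗ ∂₂₂(σ) ∗ ∂₂₁(σ⁻¹) ∗ ∂₂₃(σ⁻¹)`. -/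
def preObs (W : WeakBialgebraStr k H) (φ : H ⊗[k] B →ₗ[k] B)
    (σ σi : H ⊗[k] H →ₗ[k] B) : H ⊗[k] (H ⊗[k] H) →ₗ[k] B :=
  convOn (delta3 W)
    (convOn (delta3 W) (convOn (delta3 W) (cf20 φ σ) (cf22 W σ)) (cf21 W σi))
    (cf23 W σi)

/-- Bundled `k`-modules (to form iterated tensor powers). -/
structure ModB (k : Type) [CommRing k] : Type 1 where
  carrier : Type
  [acg : AddCommGroup carrier]
  [mod : Module k carrier]

attribute [instance] ModB.acg ModB.mod

/-- Tensor powers `H^{⊗(n+1)}`. -/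
def HpowM (k : Type) [CommRing k] (H : Type) [AddCommGroup H] [Module k H] : ℕ → ModB k
  | 0 => ⟨H⟩
  | n + 1 => ⟨H ⊗[k] (HpowM k H n).carrier⟩

/-- Comultiplication of `H^{⊗(n+1)}`. -/
def deltaPow (W : WeakBialgebraStr k H) : (n : ℕ) →
    ((HpowM k H n).carrier →ₗ[k] (HpowM k H n).carrier ⊗[k] (HpowM k H n).carrier)
  | 0 => W.delta
  | n + 1 => deltaT W.delta (deltaPow W n)

/-- Iterated multiplication `m : H^{⊗(n+1)} → H`. -/
def mPow (W : WeakBialgebraStr k H) : (n : ℕ) → ((HpowM k H n).carrier →ₗ[k] H)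
  | 0 => LinearMap.id
  | n + 1 => W.mu ∘ₗ lTensor H (mPow W n)

/-- Iterated action `φ^{⊗(n+1)} : H^{⊗(n+1)} ⊗ B → B`. -/
def phiPow (φ : H ⊗[k] B →ₗ[k] B) : (n : ℕ) →
    ((HpowM k H n).carrier ⊗[k] B →ₗ[k] B)
  | 0 => φ
  | n + 1 => φ ∘ₗ lTensor H (phiPow φ n)
      ∘ₗ (TensorProduct.assoc k H (HpowM k H n).carrier B).toLinearMap

/-- `u_{n+1} = u₁ ∘ m^{⊗(n+1)}`. -/
def uPow (W : WeakBialgebraStr k H) (φ : H ⊗[k] B →ₗ[k] B) (n : ℕ) :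
    (HpowM k H n).carrier →ₗ[k] B := u1 φ ∘ₗ mPow W n

end WK

open WK in
lemma aux1L {k : Type} [CommRing k] {H : Type} [AddCommGroup H] [Module k H]
    (W : WeakBialgebraStr k H) (t : H ⊗[k] H) :
    W.mu ((TensorProduct.comm k H H) (lTensor H W.pibarL t)) =
    (TensorProduct.rid k H) (lTensor H W.eps
      (TensorProduct.map W.mu W.mu
        (tensorTensorTensorComm k H H H H (W.delta W.one ⊗ₜ[k] t)))) := by
  induction t using TensorProduct.induction_on with
  | zero => simp
  | add x y hx hy => simp only [map_add, tmul_add, hx, hy]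
  | tmul a b =>
      simp only [WeakBialgebraStr.pibarL, WeakBialgebraStr.epsmu, coe_comp,
        Function.comp_apply, lTensor_tmul, LinearEquiv.coe_coe, TensorProduct.mk_apply]
      induction W.delta W.one using TensorProduct.induction_on with
      | zero => simp
      | add u v hu hv =>
          simp only [map_add, add_tmul, tmul_add, hu, hv]
      | tmul e f =>
          simp only [assoc_tmul, lTensor_tmul, coe_comp, Function.comp_apply, rid_tmul,
            tmul_smul, map_smul, comm_tmul, tensorTensorTensorComm_tmul, map_tmul,
            lid_tmul, smul_tmul']
          rw [← TensorProduct.smul_tmul', map_smul]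

open WK in
lemma aux1R {k : Type} [CommRing k] {H : Type} [AddCommGroup H] [Module k H]
    (W : WeakBialgebraStr k H) (t : H ⊗[k] H) :
    W.mu ((TensorProduct.comm k H H) (rTensor H W.pibarR t)) =
    (TensorProduct.lid k H) (rTensor H W.eps
      (TensorProduct.map W.mu W.mu
        (tensorTensorTensorComm k H H H H (t ⊗ₜ[k] W.delta W.one)))) := by
  induction t using TensorProduct.induction_on with
  | zero => simp
  | add x y hx hy => simp only [map_add, add_tmul, hx, hy]
  | tmul a b =>
      simp only [WeakBialgebraStr.pibarR, WeakBialgebraStr.epsmu, coe_comp,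
        Function.comp_apply, rTensor_tmul, LinearEquiv.coe_coe, TensorProduct.mk_apply]
      induction W.delta W.one using TensorProduct.induction_on with
      | zero => simp
      | add u v hu hv =>
          simp only [map_add, add_tmul, tmul_add, hu, hv]
      | tmul e f =>
          simp only [comm_tmul, assoc_symm_tmul, rTensor_tmul, lTensor_tmul, coe_comp,
            Function.comp_apply, lid_tmul, rid_tmul, smul_tmul', tmul_smul, map_smul,
            tensorTensorTensorComm_tmul, map_tmul]
          rw [← TensorProduct.smul_tmul', map_smul]

open WK in
theorem statement1 {k : Type} [CommRing k] {H : Type} [AddCommGroup H] [Module k H]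
    (W : WeakHopfStr k H) :
    W.toWeakBialgebraStr.mu ∘ₗ (TensorProduct.comm k H H).toLinearMap
        ∘ₗ lTensor H W.toWeakBialgebraStr.pibarL ∘ₗ W.toWeakBialgebraStr.delta
      = LinearMap.id ∧
    W.toWeakBialgebraStr.mu ∘ₗ (TensorProduct.comm k H H).toLinearMap
        ∘ₗ rTensor H W.toWeakBialgebraStr.pibarR ∘ₗ W.toWeakBialgebraStr.delta
      = LinearMap.id := by
  set V := W.toWeakBialgebraStr with hV
  constructor
  · ext h
    have key : V.delta h
        = TensorProduct.map V.mu V.mu (tensorTensorTensorComm k H H H H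
            (V.delta V.one ⊗ₜ[k] V.delta h)) := by
      have := V.a1 V.one h
      rwa [V.one_mul'] at this
    simp only [coe_comp, Function.comp_apply, LinearEquiv.coe_coe, id_coe, id_eq]
    rw [aux1L V (V.delta h), ← key]
    exact V.counit_r h
  · ext h
    have key : V.delta h
        = TensorProduct.map V.mu V.mu (tensorTensorTensorComm k H H H H
            (V.delta h ⊗ₜ[k] V.delta V.one)) := by
      have := V.a1 h V.one
      rwa [V.mul_one'] at this
    simp only [coe_comp, Function.comp_apply, LinearEquiv.coe_coe, id_coe, id_eq]
    rw [aux1R V (V.delta h), ← key]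
    exact V.counit_l h
end
end

section
/- Let H be a weak Hopf algebra, φ_B : H⊗B → B a measuring, and σ : H⊗H → B a morphism satisfying σ ∗ u_2 = σ (where u_2 = φ_B∘(μ_H⊗η_B) and ∗ is convolution on Hom(H⊗H,B)). Then: (1) μ_B∘(B⊗u_1)∘F_σ = σ, where u_1 = φ_B∘(H⊗η_B) and F_σ = (σ⊗μ_H)∘δ_{H⊗H}; (2) ∇_{B⊗H}∘F_σ = F_σ, where ∇_{B⊗H} = (μ_B⊗H)∘(B⊗((u_1⊗H)∘δ_H)); (3) (B⊗ε_H)∘F_σ = σ. Conversely, if σ satisfies (2) and (3), then σ ∗ u_2 = σ. -/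
open TensorProduct LinearMap

noncomputable section

section Aux
open WK

variable {k : Type} [CommRing k] {H : Type} [AddCommGroup H] [Module k H]
  {B : Type} [Ring B] [Algebra k B]

/-- The shuffle `(a⊗(b⊗c))⊗(p⊗(q⊗r)) ↦ (a⊗p)⊗((b⊗q)⊗(c⊗r))`. -/
def Shuf (k : Type) [CommRing k] (H : Type) [AddCommGroup H] [Module k H] :
    (H ⊗[k] (H ⊗[k] H)) ⊗[k] (H ⊗[k] (H ⊗[k] H)) →ₗ[k]
      (H ⊗[k] H) ⊗[k] ((H ⊗[k] H) ⊗[k] (H ⊗[k] H)) :=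
  lTensor (H ⊗[k] H) (tensorTensorTensorComm k H H H H).toLinearMap ∘ₗ
    (tensorTensorTensorComm k H (H ⊗[k] H) H (H ⊗[k] H)).toLinearMap

lemma shuf_C1 (W : WeakBialgebraStr k H) (s t : H ⊗[k] H) :
    lTensor (H ⊗[k] H) (delta2 W) (tensorTensorTensorComm k H H H H (s ⊗ₜ[k] t))
      = Shuf k H (lTensor H W.delta s ⊗ₜ[k] lTensor H W.delta t) := by
  induction s using TensorProduct.induction_on with
  | zero => simp
  | tmul a b =>
    induction t using TensorProduct.induction_on with
    | zero => simp
    | tmul p q =>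
      simp [Shuf, delta2, deltaT, tensorTensorTensorComm_tmul]
    | add t1 t2 h1 h2 => simp [tmul_add, h1, h2]
  | add s1 s2 h1 h2 => simp [add_tmul, h1, h2]

lemma shuf_inner (u v : H ⊗[k] H) (b q : H) :
    TensorProduct.assoc k (H ⊗[k] H) (H ⊗[k] H) (H ⊗[k] H)
        ((tensorTensorTensorComm k H H H H (u ⊗ₜ[k] v)) ⊗ₜ[k] (b ⊗ₜ[k] q))
      = Shuf k H ((TensorProduct.assoc k H H H (u ⊗ₜ[k] b))
          ⊗ₜ[k] (TensorProduct.assoc k H H H (v ⊗ₜ[k] q))) := by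
  induction u using TensorProduct.induction_on with
  | zero => simp
  | tmul a1 a2 =>
    induction v using TensorProduct.induction_on with
    | zero => simp
    | tmul p1 p2 => simp [Shuf, tensorTensorTensorComm_tmul]
    | add v1 v2 h1 h2 => simp [tmul_add, add_tmul, h1, h2]
  | add u1 u2 h1 h2 => simp [tmul_add, add_tmul, h1, h2]

lemma shuf_C2 (W : WeakBialgebraStr k H) (s t : H ⊗[k] H) :
    TensorProduct.assoc k (H ⊗[k] H) (H ⊗[k] H) (H ⊗[k] H)
        (rTensor (H ⊗[k] H) (delta2 W) (tensorTensorTensorComm k H H H H (s ⊗ₜ[k] t)))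
      = Shuf k H (TensorProduct.assoc k H H H (rTensor H W.delta s)
          ⊗ₜ[k] TensorProduct.assoc k H H H (rTensor H W.delta t)) := by
  induction s using TensorProduct.induction_on with
  | zero => simp
  | tmul a b =>
    induction t using TensorProduct.induction_on with
    | zero => simp
    | tmul p q =>
      have : delta2 W (a ⊗ₜ[k] p) = tensorTensorTensorComm k H H H H
          (W.delta a ⊗ₜ[k] W.delta p) := by simp [delta2, deltaT]
      simp only [tensorTensorTensorComm_tmul, rTensor_tmul, this]
      exact shuf_inner (W.delta a) (W.delta p) b q
    | add t1 t2 h1 h2 => simp [tmul_add, h1, h2]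
  | add s1 s2 h1 h2 => simp [add_tmul, h1, h2]

lemma coassoc2 (W : WeakBialgebraStr k H) :
    lTensor (H ⊗[k] H) (delta2 W) ∘ₗ delta2 W
      = (TensorProduct.assoc k (H ⊗[k] H) (H ⊗[k] H) (H ⊗[k] H)).toLinearMap
          ∘ₗ rTensor (H ⊗[k] H) (delta2 W) ∘ₗ delta2 W := by
  apply TensorProduct.ext'
  intro x y
  have hd2 : delta2 W (x ⊗ₜ[k] y) = tensorTensorTensorComm k H H H H
      (W.delta x ⊗ₜ[k] W.delta y) := by simp [delta2, deltaT]
  have hx : TensorProduct.assoc k H H H (rTensor H W.delta (W.delta x))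
      = lTensor H W.delta (W.delta x) := by
    rw [W.coassoc x]; exact (TensorProduct.assoc k H H H).apply_symm_apply _
  have hy : TensorProduct.assoc k H H H (rTensor H W.delta (W.delta y))
      = lTensor H W.delta (W.delta y) := by
    rw [W.coassoc y]; exact (TensorProduct.assoc k H H H).apply_symm_apply _
  simp only [LinearMap.comp_apply, LinearEquiv.coe_coe, hd2]
  rw [shuf_C1 W, shuf_C2 W, hx, hy]

lemma deltamu (W : WeakBialgebraStr k H) :
    W.delta ∘ₗ W.mu = TensorProduct.map W.mu W.mu ∘ₗ delta2 W := by
  apply TensorProduct.ext'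
  intro x y
  simp only [LinearMap.comp_apply, delta2, deltaT, TensorProduct.map_tmul,
    LinearEquiv.coe_coe]
  exact W.a1 x y

lemma aux_L1 (W : WeakBialgebraStr k H) (φ : H ⊗[k] B →ₗ[k] B) (σ : H ⊗[k] H →ₗ[k] B) :
    LinearMap.mul' k B ∘ₗ lTensor B (u1 φ) ∘ₗ Fmap W σ = convOn (delta2 W) σ (u2 W φ) := by
  rw [Fmap, convOn]
  rw [← LinearMap.comp_assoc (delta2 W) (TensorProduct.map σ W.mu) (lTensor B (u1 φ)),
    lTensor_comp_map]
  rfl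

lemma aux_L2 (W : WeakBialgebraStr k H) (φ : H ⊗[k] B →ₗ[k] B) :
    (TensorProduct.rid k B).toLinearMap ∘ₗ lTensor B W.eps ∘ₗ nabla W φ
      = LinearMap.mul' k B ∘ₗ lTensor B (u1 φ) := by
  apply TensorProduct.ext'
  intro b h
  have key : ∀ t : H ⊗[k] H,
      TensorProduct.rid k B (lTensor B W.eps (rTensor H (LinearMap.mul' k B)
        ((TensorProduct.assoc k B B H).symm (b ⊗ₜ[k] rTensor H (u1 φ) t))))
      = b * u1 φ (TensorProduct.rid k H (lTensor H W.eps t)) := by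
    intro t
    induction t using TensorProduct.induction_on with
    | zero => simp
    | tmul x y =>
      simp [TensorProduct.rid_tmul, LinearMap.mul'_apply, Algebra.mul_smul_comm]
    | add t1 t2 h1 h2 => simp only [tmul_add, map_add, h1, h2, mul_add, map_add]
  simp only [nabla, LinearMap.comp_apply, lTensor_tmul, LinearEquiv.coe_coe]
  rw [key (W.delta h), W.counit_r h]
  simp [LinearMap.mul'_apply]

lemma aux_L3 (W : WeakBialgebraStr k H) (φ : H ⊗[k] B →ₗ[k] B) (σ : H ⊗[k] H →ₗ[k] B) :
    nabla W φ ∘ₗ Fmap W σ = Fmap W (convOn (delta2 W) σ (u2 W φ)) := by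
  have h1 : lTensor B (rTensor H (u1 φ) ∘ₗ W.delta) ∘ₗ TensorProduct.map σ W.mu
      = TensorProduct.map σ (TensorProduct.map (u2 W φ) W.mu) ∘ₗ
          lTensor (H ⊗[k] H) (delta2 W) := by
    rw [lTensor_comp_map, LinearMap.comp_assoc, deltamu W]
    simp only [← LinearMap.comp_assoc, rTensor_comp_map]
    rw [show u1 φ ∘ₗ W.mu = u2 W φ from rfl, ← map_comp_lTensor]
  calc nabla W φ ∘ₗ Fmap W σ
      = rTensor H (LinearMap.mul' k B) ∘ₗ (TensorProduct.assoc k B B H).symm.toLinearMap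
          ∘ₗ (lTensor B (rTensor H (u1 φ) ∘ₗ W.delta) ∘ₗ TensorProduct.map σ W.mu)
          ∘ₗ delta2 W := by
        simp only [nabla, Fmap, LinearMap.comp_assoc]
    _ = rTensor H (LinearMap.mul' k B) ∘ₗ (TensorProduct.assoc k B B H).symm.toLinearMap
          ∘ₗ TensorProduct.map σ (TensorProduct.map (u2 W φ) W.mu)
          ∘ₗ (lTensor (H ⊗[k] H) (delta2 W) ∘ₗ delta2 W) := by
        rw [h1]; simp only [LinearMap.comp_assoc]
    _ = rTensor H (LinearMap.mul' k B) ∘ₗ (TensorProduct.assoc k B B H).symm.toLinearMap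
          ∘ₗ (TensorProduct.map σ (TensorProduct.map (u2 W φ) W.mu)
            ∘ₗ (TensorProduct.assoc k (H ⊗[k] H) (H ⊗[k] H) (H ⊗[k] H)).toLinearMap)
          ∘ₗ rTensor (H ⊗[k] H) (delta2 W) ∘ₗ delta2 W := by
        rw [coassoc2 W]; simp only [LinearMap.comp_assoc]
    _ = rTensor H (LinearMap.mul' k B) ∘ₗ ((TensorProduct.assoc k B B H).symm.toLinearMap
          ∘ₗ (TensorProduct.assoc k B B H).toLinearMap)
          ∘ₗ TensorProduct.map (TensorProduct.map σ (u2 W φ)) W.mu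
          ∘ₗ rTensor (H ⊗[k] H) (delta2 W) ∘ₗ delta2 W := by
        rw [TensorProduct.map_map_comp_assoc_eq]; simp only [LinearMap.comp_assoc]
    _ = (rTensor H (LinearMap.mul' k B)
          ∘ₗ TensorProduct.map (TensorProduct.map σ (u2 W φ)) W.mu
          ∘ₗ rTensor (H ⊗[k] H) (delta2 W)) ∘ₗ delta2 W := by
        simp only [LinearEquiv.comp_coe, LinearEquiv.symm_trans_self,
          LinearEquiv.self_trans_symm, LinearEquiv.refl_toLinearMap, LinearMap.id_comp,
          LinearMap.comp_assoc]
    _ = Fmap W (convOn (delta2 W) σ (u2 W φ)) := by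
        simp only [← LinearMap.comp_assoc, rTensor_comp_map, map_comp_rTensor]
        rw [Fmap, convOn]
        simp only [LinearMap.comp_assoc]
  
end Aux

open WK in
theorem statement2 {k : Type} [CommRing k] {H : Type} [AddCommGroup H] [Module k H]
    {B : Type} [Ring B] [Algebra k B]
    (W : WeakHopfStr k H) (φ : H ⊗[k] B →ₗ[k] B)
    (hφ : IsMeasuring W.toWeakBialgebraStr φ) (σ : H ⊗[k] H →ₗ[k] B) :
    (convOn (delta2 W.toWeakBialgebraStr) σ (u2 W.toWeakBialgebraStr φ) = σ →
      (LinearMap.mul' k B ∘ₗ lTensor B (u1 φ) ∘ₗ Fmap W.toWeakBialgebraStr σ = σ ∧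
       nabla W.toWeakBialgebraStr φ ∘ₗ Fmap W.toWeakBialgebraStr σ
          = Fmap W.toWeakBialgebraStr σ ∧
       (TensorProduct.rid k B).toLinearMap ∘ₗ lTensor B W.toWeakBialgebraStr.eps
          ∘ₗ Fmap W.toWeakBialgebraStr σ = σ)) ∧
    ((nabla W.toWeakBialgebraStr φ ∘ₗ Fmap W.toWeakBialgebraStr σ
          = Fmap W.toWeakBialgebraStr σ ∧
      (TensorProduct.rid k B).toLinearMap ∘ₗ lTensor B W.toWeakBialgebraStr.eps
          ∘ₗ Fmap W.toWeakBialgebraStr σ = σ) →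
      convOn (delta2 W.toWeakBialgebraStr) σ (u2 W.toWeakBialgebraStr φ) = σ) := by
  constructor
  · intro h
    have h1 : LinearMap.mul' k B ∘ₗ lTensor B (u1 φ) ∘ₗ Fmap W.toWeakBialgebraStr σ = σ :=
      (aux_L1 _ φ σ).trans h
    have h2 : nabla W.toWeakBialgebraStr φ ∘ₗ Fmap W.toWeakBialgebraStr σ
        = Fmap W.toWeakBialgebraStr σ := by rw [aux_L3, h]
    have hL2' := congrArg (fun f => f ∘ₗ Fmap W.toWeakBialgebraStr σ)
      (aux_L2 W.toWeakBialgebraStr φ)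
    simp only [LinearMap.comp_assoc] at hL2'
    refine ⟨h1, h2, ?_⟩
    rw [← h2, hL2', h1]
  · rintro ⟨h2, h3⟩
    have hL2' := congrArg (fun f => f ∘ₗ Fmap W.toWeakBialgebraStr σ)
      (aux_L2 W.toWeakBialgebraStr φ)
    simp only [LinearMap.comp_assoc] at hL2'
    rw [← aux_L1 W.toWeakBialgebraStr φ σ, ← hL2', h2]
    exact h3
end
end

section
/- Let H be a weak Hopf algebra, φ_B a measuring, and σ : H⊗H → B with σ ∗ u_2 = σ. Then σ∘(η_H⊗H) = σ∘c_{H,H}∘(H⊗Π̄^L)∘δ_H and σ∘(H⊗η_H) = σ∘(H⊗Π^R)∘δ_H. -/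
open TensorProduct LinearMap

noncomputable section

namespace WK2
open WK

variable {k : Type} [CommRing k] {H : Type} [AddCommGroup H] [Module k H]
variable {B : Type} [Ring B] [Algebra k B]
variable (V : WK.WeakBialgebraStr k H)

lemma aux_D_mul_one (x : H) :
    TensorProduct.map V.mu V.mu
      (tensorTensorTensorComm k H H H H (V.delta x ⊗ₜ[k] V.delta V.one)) = V.delta x := by
  have h := V.a1 x V.one
  rw [V.mul_one'] at h
  exact h.symm

lemma aux_one_mul_D (x : H) :
    TensorProduct.map V.mu V.mu
      (tensorTensorTensorComm k H H H H (V.delta V.one ⊗ₜ[k] V.delta x)) = V.delta x := by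
  have h := V.a1 V.one x
  rw [V.one_mul'] at h
  exact h.symm

lemma theta_piR (g : H) : V.mu (lTensor H V.piR (V.delta g)) = g := by
  have key0 : ∀ (a b : H) (u : H ⊗[k] H),
      V.mu (a ⊗ₜ[k] ((TensorProduct.rid k H) (lTensor H V.epsmu
        (lTensor H (TensorProduct.comm k H H).toLinearMap
          ((TensorProduct.assoc k H H H) (u ⊗ₜ[k] b))))))
      = (TensorProduct.rid k H) (lTensor H V.eps (TensorProduct.map V.mu V.mu
          (tensorTensorTensorComm k H H H H ((a ⊗ₜ[k] b) ⊗ₜ[k] u)))) := by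
    intro a b u
    induction u using TensorProduct.induction_on with
    | zero => simp
    | tmul c d =>
        simp only [LinearMap.coe_comp, Function.comp_apply, LinearEquiv.coe_coe,
          assoc_tmul, comm_tmul, lTensor_tmul, rid_tmul, map_tmul,
          tensorTensorTensorComm_tmul, tmul_smul, smul_tmul', LinearMap.map_smul]
        simp [WK.WeakBialgebraStr.epsmu, ← smul_tmul', LinearMap.map_smul]
    | add u v hu hv =>
        simp only [add_tmul, tmul_add, map_add, hu, hv]
  have key : ∀ t : H ⊗[k] H, V.mu (lTensor H V.piR t)
      = (TensorProduct.rid k H) (lTensor H V.eps (TensorProduct.map V.mu V.mu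
          (tensorTensorTensorComm k H H H H (t ⊗ₜ[k] V.delta V.one)))) := by
    intro t
    induction t using TensorProduct.induction_on with
    | zero => simp
    | tmul a b =>
        have := key0 a b (V.delta V.one)
        simpa [WK.WeakBialgebraStr.piR] using this
    | add u v hu hv => simp only [map_add, add_tmul, hu, hv]
  rw [key, aux_D_mul_one, V.counit_r]

lemma theta_pibarL (g : H) :
    V.mu (rTensor H V.pibarL ((TensorProduct.comm k H H) (V.delta g))) = g := by
  have key0 : ∀ (x y : H) (u : H ⊗[k] H),
      V.mu (((TensorProduct.rid k H) (lTensor H V.epsmu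
        ((TensorProduct.assoc k H H H) (u ⊗ₜ[k] y)))) ⊗ₜ[k] x)
      = (TensorProduct.rid k H) (lTensor H V.eps (TensorProduct.map V.mu V.mu
          (tensorTensorTensorComm k H H H H (u ⊗ₜ[k] (x ⊗ₜ[k] y))))) := by
    intro x y u
    induction u using TensorProduct.induction_on with
    | zero => simp
    | tmul c d =>
        simp only [LinearMap.coe_comp, Function.comp_apply, LinearEquiv.coe_coe,
          assoc_tmul, comm_tmul, lTensor_tmul, rid_tmul, map_tmul,
          tensorTensorTensorComm_tmul, tmul_smul, smul_tmul', LinearMap.map_smul]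
        simp [WK.WeakBialgebraStr.epsmu, ← smul_tmul', LinearMap.map_smul]
    | add u v hu hv =>
        simp only [add_tmul, tmul_add, map_add, hu, hv]
  have key : ∀ t : H ⊗[k] H, V.mu (rTensor H V.pibarL ((TensorProduct.comm k H H) t))
      = (TensorProduct.rid k H) (lTensor H V.eps (TensorProduct.map V.mu V.mu
          (tensorTensorTensorComm k H H H H (V.delta V.one ⊗ₜ[k] t)))) := by
    intro t
    induction t using TensorProduct.induction_on with
    | zero => simp
    | tmul x y =>
        have := key0 x y (V.delta V.one)
        simpa [WK.WeakBialgebraStr.pibarL] using this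
    | add u v hu hv => simp only [map_add, tmul_add, hu, hv]
  rw [key, aux_one_mul_D, V.counit_r]

lemma delta_piR (g : H) :
    V.delta (V.piR g)
      = lTensor H (V.mu ∘ₗ (TensorProduct.comm k H H).toLinearMap)
          ((TensorProduct.assoc k H H H) (V.delta V.one ⊗ₜ[k] V.piR g)) := by
  have hpi : V.piR g = (TensorProduct.rid k H) (lTensor H V.epsmu
      (lTensor H (TensorProduct.comm k H H).toLinearMap
        ((TensorProduct.assoc k H H H) (V.delta V.one ⊗ₜ[k] g)))) := by
    simp [WK.WeakBialgebraStr.piR]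
  have s1 : ∀ u : H ⊗[k] H,
      V.delta ((TensorProduct.rid k H) (lTensor H V.epsmu
        (lTensor H (TensorProduct.comm k H H).toLinearMap
          ((TensorProduct.assoc k H H H) (u ⊗ₜ[k] g)))))
      = (TensorProduct.rid k (H ⊗[k] H)) (lTensor (H ⊗[k] H)
          (V.epsmu ∘ₗ TensorProduct.mk k H H g) (rTensor H V.delta u)) := by
    intro u
    induction u using TensorProduct.induction_on with
    | zero => simp
    | tmul a c => simp [WK.WeakBialgebraStr.epsmu, LinearMap.map_smul]
    | add u v hu hv => simp only [add_tmul, map_add, hu, hv]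
  have s3 : ∀ u v : H ⊗[k] H,
      (TensorProduct.rid k (H ⊗[k] H)) (lTensor (H ⊗[k] H)
          (V.epsmu ∘ₗ TensorProduct.mk k H H g)
          (rTensor H (lTensor H (V.mu ∘ₗ (TensorProduct.comm k H H).toLinearMap)
              ∘ₗ (TensorProduct.assoc k H H H).toLinearMap)
            ((TensorProduct.assoc k (H ⊗[k] H) H H).symm (u ⊗ₜ[k] v))))
      = lTensor H (V.mu ∘ₗ (TensorProduct.comm k H H).toLinearMap)
          ((TensorProduct.assoc k H H H) (u ⊗ₜ[k]
            ((TensorProduct.rid k H) (lTensor H V.epsmu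
              (lTensor H (TensorProduct.comm k H H).toLinearMap
                ((TensorProduct.assoc k H H H) (v ⊗ₜ[k] g))))))) := by
    intro u v
    induction u using TensorProduct.induction_on with
    | zero => simp
    | tmul a b =>
        induction v using TensorProduct.induction_on with
        | zero => simp
        | tmul c d =>
            simp [WK.WeakBialgebraStr.epsmu, tmul_smul, LinearMap.map_smul,
              smul_tmul, ← smul_tmul']
        | add v w hv hw => simp only [tmul_add, add_tmul, map_add, hv, hw]
    | add u w hu hw => simp only [tmul_add, add_tmul, map_add, hu, hw]
  calc V.delta (V.piR g)
      = (TensorProduct.rid k (H ⊗[k] H)) (lTensor (H ⊗[k] H)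
          (V.epsmu ∘ₗ TensorProduct.mk k H H g)
          (rTensor H V.delta (V.delta V.one))) := by rw [hpi, s1]
    _ = lTensor H (V.mu ∘ₗ (TensorProduct.comm k H H).toLinearMap)
          ((TensorProduct.assoc k H H H) (V.delta V.one ⊗ₜ[k] V.piR g)) := by
        rw [V.a3', s3, ← hpi]

lemma delta_pibarL (g : H) :
    V.delta (V.pibarL g)
      = lTensor H V.mu
          ((TensorProduct.assoc k H H H) (V.delta V.one ⊗ₜ[k] V.pibarL g)) := by
  have hpi : V.pibarL g = (TensorProduct.rid k H) (lTensor H V.epsmu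
      ((TensorProduct.assoc k H H H) (V.delta V.one ⊗ₜ[k] g))) := by
    simp [WK.WeakBialgebraStr.pibarL]
  have s1 : ∀ u : H ⊗[k] H,
      V.delta ((TensorProduct.rid k H) (lTensor H V.epsmu
        ((TensorProduct.assoc k H H H) (u ⊗ₜ[k] g))))
      = (TensorProduct.rid k (H ⊗[k] H)) (lTensor (H ⊗[k] H)
          (V.epsmu ∘ₗ (TensorProduct.mk k H H).flip g) (rTensor H V.delta u)) := by
    intro u
    induction u using TensorProduct.induction_on with
    | zero => simp
    | tmul a c => simp [WK.WeakBialgebraStr.epsmu, LinearMap.map_smul]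
    | add u v hu hv => simp only [add_tmul, map_add, hu, hv]
  have s3 : ∀ u v : H ⊗[k] H,
      (TensorProduct.rid k (H ⊗[k] H)) (lTensor (H ⊗[k] H)
          (V.epsmu ∘ₗ (TensorProduct.mk k H H).flip g)
          (rTensor H (lTensor H V.mu ∘ₗ (TensorProduct.assoc k H H H).toLinearMap)
            ((TensorProduct.assoc k (H ⊗[k] H) H H).symm (u ⊗ₜ[k] v))))
      = lTensor H V.mu
          ((TensorProduct.assoc k H H H) (u ⊗ₜ[k]
            ((TensorProduct.rid k H) (lTensor H V.epsmu
              ((TensorProduct.assoc k H H H) (v ⊗ₜ[k] g)))))) := by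
    intro u v
    induction u using TensorProduct.induction_on with
    | zero => simp
    | tmul a b =>
        induction v using TensorProduct.induction_on with
        | zero => simp
        | tmul c d =>
            simp [WK.WeakBialgebraStr.epsmu, tmul_smul, LinearMap.map_smul,
              smul_tmul, ← smul_tmul']
        | add v w hv hw => simp only [tmul_add, add_tmul, map_add, hv, hw]
    | add u w hu hw => simp only [tmul_add, add_tmul, map_add, hu, hw]
  calc V.delta (V.pibarL g)
      = (TensorProduct.rid k (H ⊗[k] H)) (lTensor (H ⊗[k] H)
          (V.epsmu ∘ₗ (TensorProduct.mk k H H).flip g)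
          (rTensor H V.delta (V.delta V.one))) := by rw [hpi, s1]
    _ = lTensor H V.mu
          ((TensorProduct.assoc k H H H) (V.delta V.one ⊗ₜ[k] V.pibarL g)) := by
        rw [V.a3, s3, ← hpi]

variable (φ : H ⊗[k] B →ₗ[k] B) (σ : H ⊗[k] H →ₗ[k] B)

/-- The convolution evaluation map. -/
def Xi : (H ⊗[k] H) ⊗[k] (H ⊗[k] H) →ₗ[k] B :=
  LinearMap.mul' k B ∘ₗ TensorProduct.map σ (u2 V φ)
    ∘ₗ (tensorTensorTensorComm k H H H H).toLinearMap

@[simp] lemma Xi_tmul (a b c d : H) :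
    Xi V φ σ ((a ⊗ₜ[k] b) ⊗ₜ[k] (c ⊗ₜ[k] d))
      = σ (a ⊗ₜ[k] c) * u1 φ (V.mu (b ⊗ₜ[k] d)) := by
  simp [Xi, WK.u2]

lemma sigma_eq (hσ : convOn (delta2 V) σ (u2 V φ) = σ) (t : H ⊗[k] H) :
    σ t = Xi V φ σ (TensorProduct.map V.delta V.delta t) := by
  conv_lhs => rw [← hσ]
  simp [convOn, delta2, deltaT, Xi]

lemma Csub (v u : H ⊗[k] H) (q : H) :
    Xi V φ σ (v ⊗ₜ[k] (lTensor H (V.mu ∘ₗ (TensorProduct.comm k H H).toLinearMap)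
        ((TensorProduct.assoc k H H H) (u ⊗ₜ[k] q))))
    = Xi V φ σ ((lTensor H (V.mu ∘ₗ (TensorProduct.mk k H H).flip q) v) ⊗ₜ[k] u) := by
  induction v using TensorProduct.induction_on with
  | zero => simp
  | tmul a b =>
      induction u using TensorProduct.induction_on with
      | zero => simp
      | tmul c d => simp [V.mul_assoc']
      | add u w hu hw => simp only [tmul_add, add_tmul, map_add, hu, hw]
  | add v w hv hw => simp only [tmul_add, add_tmul, map_add, hv, hw]

lemma Csub' (u v : H ⊗[k] H) (q : H) :
    Xi V φ σ ((lTensor H V.mu ((TensorProduct.assoc k H H H) (u ⊗ₜ[k] q))) ⊗ₜ[k] v)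
    = Xi V φ σ (u ⊗ₜ[k] (lTensor H (V.mu ∘ₗ TensorProduct.mk k H H q) v)) := by
  induction u using TensorProduct.induction_on with
  | zero => simp
  | tmul a b =>
      induction v using TensorProduct.induction_on with
      | zero => simp
      | tmul c d => simp [V.mul_assoc']
      | add u w hu hw => simp only [tmul_add, add_tmul, map_add, hu, hw]
  | add v w hv hw => simp only [tmul_add, add_tmul, map_add, hv, hw]

lemma goal2 (hσ : convOn (delta2 V) σ (u2 V φ) = σ) (h : H) :
    σ (h ⊗ₜ[k] V.one) = σ (lTensor H V.piR (V.delta h)) := by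
  have stepA : ∀ t : H ⊗[k] H,
      Xi V φ σ (TensorProduct.map V.delta (V.delta ∘ₗ V.piR) t)
      = Xi V φ σ ((lTensor H (V.mu ∘ₗ lTensor H V.piR)
          ((TensorProduct.assoc k H H H) (rTensor H V.delta t))) ⊗ₜ[k] V.delta V.one) := by
    intro t
    induction t using TensorProduct.induction_on with
    | zero => simp
    | tmul x g =>
        have h1 : TensorProduct.map V.delta (V.delta ∘ₗ V.piR) (x ⊗ₜ[k] g)
            = V.delta x ⊗ₜ[k] (lTensor H (V.mu ∘ₗ (TensorProduct.comm k H H).toLinearMap)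
                ((TensorProduct.assoc k H H H) (V.delta V.one ⊗ₜ[k] V.piR g))) := by
          simp [delta_piR]
        rw [h1, Csub]
        congr 2
        have : ∀ v : H ⊗[k] H,
            lTensor H (V.mu ∘ₗ (TensorProduct.mk k H H).flip (V.piR g)) v
            = lTensor H (V.mu ∘ₗ lTensor H V.piR)
                ((TensorProduct.assoc k H H H) (v ⊗ₜ[k] g)) := by
          intro v
          induction v using TensorProduct.induction_on with
          | zero => simp
          | tmul a b => simp
          | add v w hv hw => simp only [add_tmul, map_add, hv, hw]
        simpa using this (V.delta x)
    | add t s ht hs => simp only [map_add, add_tmul, ht, hs]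
  have m1 : TensorProduct.map V.delta V.delta (lTensor H V.piR (V.delta h))
      = TensorProduct.map V.delta (V.delta ∘ₗ V.piR) (V.delta h) := by
    have : TensorProduct.map V.delta V.delta ∘ₗ lTensor H V.piR
        = TensorProduct.map V.delta (V.delta ∘ₗ V.piR) := by
      apply TensorProduct.ext'; intro x y; simp
    exact congrFun (congrArg (fun f => f.toFun) this) (V.delta h)
  have co : (TensorProduct.assoc k H H H) (rTensor H V.delta (V.delta h))
      = lTensor H V.delta (V.delta h) := by
    rw [V.coassoc h]; exact (TensorProduct.assoc k H H H).apply_symm_apply _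
  have thid : lTensor H (V.mu ∘ₗ lTensor H V.piR) (lTensor H V.delta (V.delta h))
      = V.delta h := by
    have : lTensor H (V.mu ∘ₗ lTensor H V.piR) ∘ₗ lTensor H V.delta
        = lTensor H ((V.mu ∘ₗ lTensor H V.piR) ∘ₗ V.delta) := by
      rw [← lTensor_comp]
    rw [← LinearMap.comp_apply, this]
    have hid : (V.mu ∘ₗ lTensor H V.piR) ∘ₗ V.delta = LinearMap.id := by
      apply LinearMap.ext; intro g; simpa using theta_piR V g
    rw [hid, lTensor_id]; rfl
  symm
  calc σ (lTensor H V.piR (V.delta h))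
      = Xi V φ σ (TensorProduct.map V.delta V.delta (lTensor H V.piR (V.delta h))) :=
        sigma_eq V φ σ hσ _
    _ = Xi V φ σ ((V.delta h) ⊗ₜ[k] V.delta V.one) := by
        rw [m1, stepA, co, thid]
    _ = Xi V φ σ (TensorProduct.map V.delta V.delta (h ⊗ₜ[k] V.one)) := by simp
    _ = σ (h ⊗ₜ[k] V.one) := (sigma_eq V φ σ hσ _).symm

lemma goal1 (hσ : convOn (delta2 V) σ (u2 V φ) = σ) (h : H) :
    σ (V.one ⊗ₜ[k] h)
      = σ ((TensorProduct.comm k H H) (lTensor H V.pibarL (V.delta h))) := by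
  have stepA : ∀ t : H ⊗[k] H,
      Xi V φ σ (TensorProduct.map V.delta V.delta
          ((TensorProduct.comm k H H) (lTensor H V.pibarL t)))
      = Xi V φ σ (V.delta V.one ⊗ₜ[k]
          (lTensor H (V.mu ∘ₗ rTensor H V.pibarL ∘ₗ (TensorProduct.comm k H H).toLinearMap)
            ((TensorProduct.assoc k H H H) (rTensor H V.delta t)))) := by
    intro t
    induction t using TensorProduct.induction_on with
    | zero => simp
    | tmul x g =>
        have h1 : TensorProduct.map V.delta V.delta
              ((TensorProduct.comm k H H) (lTensor H V.pibarL (x ⊗ₜ[k] g)))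
            = (lTensor H V.mu ((TensorProduct.assoc k H H H)
                (V.delta V.one ⊗ₜ[k] V.pibarL g))) ⊗ₜ[k] V.delta x := by
          simp [delta_pibarL]
        rw [h1, Csub']
        congr 2
        have : ∀ v : H ⊗[k] H,
            lTensor H (V.mu ∘ₗ TensorProduct.mk k H H (V.pibarL g)) v
            = lTensor H (V.mu ∘ₗ rTensor H V.pibarL
                  ∘ₗ (TensorProduct.comm k H H).toLinearMap)
                ((TensorProduct.assoc k H H H) (v ⊗ₜ[k] g)) := by
          intro v
          induction v using TensorProduct.induction_on with
          | zero => simp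
          | tmul a b => simp
          | add v w hv hw => simp only [add_tmul, map_add, hv, hw]
        simpa using this (V.delta x)
    | add t s ht hs => simp only [map_add, tmul_add, ht, hs]
  have co : (TensorProduct.assoc k H H H) (rTensor H V.delta (V.delta h))
      = lTensor H V.delta (V.delta h) := by
    rw [V.coassoc h]; exact (TensorProduct.assoc k H H H).apply_symm_apply _
  have thid : lTensor H (V.mu ∘ₗ rTensor H V.pibarL
        ∘ₗ (TensorProduct.comm k H H).toLinearMap) (lTensor H V.delta (V.delta h))
      = V.delta h := by
    rw [← LinearMap.comp_apply, ← lTensor_comp]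
    have hid : (V.mu ∘ₗ rTensor H V.pibarL ∘ₗ (TensorProduct.comm k H H).toLinearMap)
        ∘ₗ V.delta = LinearMap.id := by
      apply LinearMap.ext; intro g; simpa using theta_pibarL V g
    rw [hid, lTensor_id]; rfl
  symm
  calc σ ((TensorProduct.comm k H H) (lTensor H V.pibarL (V.delta h)))
      = Xi V φ σ (TensorProduct.map V.delta V.delta
          ((TensorProduct.comm k H H) (lTensor H V.pibarL (V.delta h)))) :=
        sigma_eq V φ σ hσ _
    _ = Xi V φ σ (V.delta V.one ⊗ₜ[k] V.delta h) := by rw [stepA, co, thid]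
    _ = Xi V φ σ (TensorProduct.map V.delta V.delta (V.one ⊗ₜ[k] h)) := by simp
    _ = σ (V.one ⊗ₜ[k] h) := (sigma_eq V φ σ hσ _).symm

end WK2

open WK in
theorem statement3 {k : Type} [CommRing k] {H : Type} [AddCommGroup H] [Module k H]
    {B : Type} [Ring B] [Algebra k B]
    (W : WeakHopfStr k H) (φ : H ⊗[k] B →ₗ[k] B)
    (hφ : IsMeasuring W.toWeakBialgebraStr φ) (σ : H ⊗[k] H →ₗ[k] B)
    (hσ : convOn (delta2 W.toWeakBialgebraStr) σ (u2 W.toWeakBialgebraStr φ) = σ) :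
    σ ∘ₗ TensorProduct.mk k H H W.toWeakBialgebraStr.one
      = σ ∘ₗ (TensorProduct.comm k H H).toLinearMap
          ∘ₗ lTensor H W.toWeakBialgebraStr.pibarL ∘ₗ W.toWeakBialgebraStr.delta ∧
    σ ∘ₗ (TensorProduct.mk k H H).flip W.toWeakBialgebraStr.one
      = σ ∘ₗ lTensor H W.toWeakBialgebraStr.piR ∘ₗ W.toWeakBialgebraStr.delta := by
  constructor
  · apply LinearMap.ext; intro h
    simpa using WK2.goal1 W.toWeakBialgebraStr φ σ hσ h
  · apply LinearMap.ext; intro h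
    simpa using WK2.goal2 W.toWeakBialgebraStr φ σ hσ h
end
end

section
/- Let H be a weak Hopf algebra and (B, φ_B) a left weak H-module algebra. Then ∇_{B⊗H}∘(B⊗η_H) = P_{φ_B}∘(η_H⊗B), where ∇_{B⊗H} = (μ_B⊗H)∘(B⊗((u_1⊗H)∘δ_H)) and P_{φ_B} = (φ_B⊗H)∘(H⊗c_{H,B})∘(δ_H⊗B). -/
open TensorProduct LinearMap

noncomputable section

open WK in
theorem statement4 {k : Type} [CommRing k] {H : Type} [AddCommGroup H] [Module k H]
    {B : Type} [Ring B] [Algebra k B]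
    (W : WeakHopfStr k H) (φ : H ⊗[k] B →ₗ[k] B)
    (hφ : IsWMA W.toWeakBialgebraStr φ) :
    nabla W.toWeakBialgebraStr φ ∘ₗ (TensorProduct.mk k B H).flip W.toWeakBialgebraStr.one
      = Pmap W.toWeakBialgebraStr φ ∘ₗ TensorProduct.mk k H B W.toWeakBialgebraStr.one := by
  obtain ⟨hm, hu, hc⟩ := hφ
  apply LinearMap.ext; intro b
  obtain ⟨S, hS⟩ := TensorProduct.exists_finset
    (W.toWeakBialgebraStr.delta W.toWeakBialgebraStr.one)
  set g : H ⊗[k] H →ₗ[k] B :=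
    LinearMap.mul' k B ∘ₗ TensorProduct.map (φ ∘ₗ (TensorProduct.mk k H B).flip b) (u1 φ)
    with hg
  -- key pointwise computation of the measuring + twisted condition
  have key : ∀ (x : H ⊗[k] H) (b' : B),
      LinearMap.mul' k B (TensorProduct.map φ φ
        (tensorTensorTensorComm k H H B B (x ⊗ₜ[k] (b ⊗ₜ[k] b')))) =
      LinearMap.mul' k B (TensorProduct.map (φ ∘ₗ (TensorProduct.mk k H B).flip b)
        (φ ∘ₗ (TensorProduct.mk k H B).flip b') x) := by
    intro x b'
    induction x using TensorProduct.induction_on with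
    | zero => simp
    | tmul p q => simp
    | add u v hu hv => simp [tmul_add, add_tmul, hu, hv]
  have claim2 : ∀ a : H, φ (a ⊗ₜ[k] b) = g (W.toWeakBialgebraStr.delta a) := by
    intro a
    have h1 := hm a b 1
    rw [mul_one] at h1
    rw [h1, key]
    rfl
  have claim1 : ∀ a : H, b * u1 φ a =
      g ((lTensor H W.toWeakBialgebraStr.mu)
        ((TensorProduct.assoc k H H H) (W.toWeakBialgebraStr.delta W.toWeakBialgebraStr.one ⊗ₜ[k] a))) := by
    intro a
    have h1 := hm W.toWeakBialgebraStr.one b (u1 φ a)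
    rw [hu] at h1
    rw [h1, key, hS]
    simp only [TensorProduct.sum_tmul, map_sum, TensorProduct.assoc_tmul, lTensor_tmul]
    refine Finset.sum_congr rfl fun p _ => ?_
    simp only [hg, TensorProduct.map_tmul, LinearMap.mul'_apply, LinearMap.coe_comp,
      Function.comp_apply, TensorProduct.mk_apply, LinearMap.flip_apply]
    rw [← hc]
  -- a3 in summed form
  have key3 : (∑ p ∈ S, ((lTensor H W.toWeakBialgebraStr.mu)
        ((TensorProduct.assoc k H H H) (W.toWeakBialgebraStr.delta W.toWeakBialgebraStr.one ⊗ₜ[k] p.1))) ⊗ₜ[k] p.2)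
      = ∑ p ∈ S, W.toWeakBialgebraStr.delta p.1 ⊗ₜ[k] p.2 := by
    have h3 := W.toWeakBialgebraStr.a3
    rw [hS] at h3
    simp only [map_sum, rTensor_tmul, TensorProduct.sum_tmul, TensorProduct.tmul_sum,
      TensorProduct.assoc_symm_tmul, TensorProduct.assoc_tmul, lTensor_tmul,
      LinearMap.coe_comp, Function.comp_apply, LinearEquiv.coe_coe] at h3
    simp only [hS, TensorProduct.sum_tmul, map_sum, TensorProduct.assoc_tmul, lTensor_tmul]
    exact h3.symm
  -- compute both sides of the goal to sums
  simp only [LinearMap.coe_comp, Function.comp_apply, LinearMap.flip_apply,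
    TensorProduct.mk_apply, nabla, Pmap, LinearEquiv.coe_coe, lTensor_tmul, rTensor_tmul]
  rw [hS]
  simp only [map_sum, TensorProduct.sum_tmul, TensorProduct.tmul_sum, rTensor_tmul,
    TensorProduct.assoc_symm_tmul, TensorProduct.assoc_tmul, lTensor_tmul,
    TensorProduct.comm_tmul, LinearMap.mul'_apply, LinearMap.coe_comp, Function.comp_apply,
    LinearEquiv.coe_coe]
  calc (∑ p ∈ S, (b * u1 φ p.1) ⊗ₜ[k] p.2)
      = ∑ p ∈ S, (g ((lTensor H W.toWeakBialgebraStr.mu)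
          ((TensorProduct.assoc k H H H) (W.toWeakBialgebraStr.delta W.toWeakBialgebraStr.one ⊗ₜ[k] p.1)))) ⊗ₜ[k] p.2 := by
        exact Finset.sum_congr rfl fun p _ => by rw [← claim1]
    _ = rTensor H g (∑ p ∈ S, ((lTensor H W.toWeakBialgebraStr.mu)
          ((TensorProduct.assoc k H H H) (W.toWeakBialgebraStr.delta W.toWeakBialgebraStr.one ⊗ₜ[k] p.1))) ⊗ₜ[k] p.2) := by
        simp [map_sum]
    _ = rTensor H g (∑ p ∈ S, W.toWeakBialgebraStr.delta p.1 ⊗ₜ[k] p.2) := by rw [key3]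
    _ = ∑ p ∈ S, φ (p.1 ⊗ₜ[k] b) ⊗ₜ[k] p.2 := by
        simp only [map_sum, rTensor_tmul]
        exact Finset.sum_congr rfl fun p _ => by rw [← claim2]
end
end

section
/- Let H be a cocommutative weak Hopf algebra and (B,φ_B) a left weak H-module algebra. A morphism σ : H⊗H → B satisfies the twisted condition μ_B∘(B⊗σ)∘(P_{φ_B}⊗H)∘(H⊗P_{φ_B}) = μ_B∘(B⊗φ_B)∘(F_σ⊗B) if and only if σ̄^{op} ∧ φ_B^{⊗2} = σ̄ ∧ (φ_B∘(μ_H⊗B)). -/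
open TensorProduct LinearMap

noncomputable section

namespace WKAux
open WK

variable {k : Type} [CommRing k] {H : Type} [AddCommGroup H] [Module k H]
  {B : Type} [Ring B] [Algebra k B]

lemma ext3r {C : Type} [AddCommGroup C] [Module k C]
    {f g : H ⊗[k] (H ⊗[k] B) →ₗ[k] C}
    (hfg : ∀ (x y : H) (b : B), f (x ⊗ₜ[k] (y ⊗ₜ[k] b)) = g (x ⊗ₜ[k] (y ⊗ₜ[k] b))) :
    f = g := by
  apply TensorProduct.ext'
  intro x yz
  induction yz using TensorProduct.induction_on with
  | zero => simp
  | tmul y b => exact hfg x y b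
  | add s t hs ht => rw [tmul_add, map_add, map_add, hs, ht]

/-- `FF b (x ⊗ y) = φ(x ⊗ φ(y ⊗ b))`. -/
def FF (φ : H ⊗[k] B →ₗ[k] B) (b : B) : H ⊗[k] H →ₗ[k] B :=
  φ ∘ₗ lTensor H (φ ∘ₗ (TensorProduct.mk k H B).flip b)

/-- `GG b (x ⊗ y) = φ(xy ⊗ b)`. -/
def GG (W : WeakBialgebraStr k H) (φ : H ⊗[k] B →ₗ[k] B) (b : B) : H ⊗[k] H →ₗ[k] B :=
  φ ∘ₗ (TensorProduct.mk k H B).flip b ∘ₗ W.mu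

def D1 (φ : H ⊗[k] B →ₗ[k] B) (σ : H ⊗[k] H →ₗ[k] B) (b : B) :
    (H ⊗[k] H) ⊗[k] (H ⊗[k] H) →ₗ[k] B :=
  LinearMap.mul' k B ∘ₗ TensorProduct.map (FF φ b) σ

def D1' (φ : H ⊗[k] B →ₗ[k] B) (σ : H ⊗[k] H →ₗ[k] B) (b : B) :
    (H ⊗[k] H) ⊗[k] (H ⊗[k] H) →ₗ[k] B :=
  LinearMap.mul' k B ∘ₗ (TensorProduct.comm k B B).toLinearMap ∘ₗ TensorProduct.map σ (FF φ b)

def D2 (W : WeakBialgebraStr k H) (φ : H ⊗[k] B →ₗ[k] B) (σ : H ⊗[k] H →ₗ[k] B) (b : B) :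
    (H ⊗[k] H) ⊗[k] (H ⊗[k] H) →ₗ[k] B :=
  LinearMap.mul' k B ∘ₗ TensorProduct.map σ (GG W φ b)

variable (W : WeakBialgebraStr k H) (φ : H ⊗[k] B →ₗ[k] B) (σ : H ⊗[k] H →ₗ[k] B)

lemma La (h g : H) (b : B) :
    (LinearMap.mul' k B ∘ₗ lTensor B σ ∘ₗ (TensorProduct.assoc k B H H).toLinearMap
      ∘ₗ rTensor H (Pmap W φ) ∘ₗ (TensorProduct.assoc k H B H).symm.toLinearMap
      ∘ₗ lTensor H (Pmap W φ)) (h ⊗ₜ[k] (g ⊗ₜ[k] b))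
    = D1 φ σ b (tensorTensorTensorComm k H H H H (W.delta h ⊗ₜ[k] W.delta g)) := by
  simp only [D1, FF, Pmap, LinearMap.comp_apply, lTensor_tmul, rTensor_tmul,
    LinearEquiv.coe_coe]
  generalize W.delta g = y
  induction y using TensorProduct.induction_on with
  | zero => simp
  | add s t hs ht =>
      simp only [map_add, add_tmul, tmul_add] at *
      rw [hs, ht]
  | tmul y1 y2 =>
      simp only [assoc_tmul, assoc_symm_tmul, comm_tmul, lTensor_tmul, rTensor_tmul,
        LinearEquiv.coe_coe, LinearMap.comp_apply]
      generalize W.delta h = x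
      induction x using TensorProduct.induction_on with
      | zero => simp
      | add s t hs ht =>
          simp only [map_add, add_tmul, tmul_add] at *
          rw [hs, ht]
      | tmul x1 x2 =>
          simp [tensorTensorTensorComm_tmul, assoc_tmul, assoc_symm_tmul, comm_tmul,
            mul'_apply, TensorProduct.mk_apply, flip_apply]

lemma La' (h g : H) (b : B) :
    (LinearMap.mul' k B ∘ₗ lTensor B φ ∘ₗ (TensorProduct.assoc k B H B).toLinearMap
      ∘ₗ rTensor B (Fmap W σ) ∘ₗ (TensorProduct.assoc k H H B).symm.toLinearMap)
      (h ⊗ₜ[k] (g ⊗ₜ[k] b))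
    = D2 W φ σ b (tensorTensorTensorComm k H H H H (W.delta h ⊗ₜ[k] W.delta g)) := by
  simp only [D2, GG, Fmap, delta2, deltaT, LinearMap.comp_apply, lTensor_tmul, rTensor_tmul,
    LinearEquiv.coe_coe, assoc_symm_tmul, map_tmul]
  generalize W.delta h = x
  induction x using TensorProduct.induction_on with
  | zero => simp
  | add s t hs ht =>
      simp only [map_add, add_tmul, tmul_add] at *
      rw [hs, ht]
  | tmul x1 x2 =>
      generalize W.delta g = y
      induction y using TensorProduct.induction_on with
      | zero => simp
      | add s t hs ht =>
          simp only [map_add, add_tmul, tmul_add] at *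
          rw [hs, ht]
      | tmul y1 y2 =>
          simp [tensorTensorTensorComm_tmul, assoc_tmul, mul'_apply,
            TensorProduct.mk_apply, flip_apply]

lemma Lb (h g : H) (b : B) :
    wedgeOn (delta2 W) (wbarOp σ)
      (φ ∘ₗ lTensor H φ ∘ₗ (TensorProduct.assoc k H H B).toLinearMap)
      ((h ⊗ₜ[k] g) ⊗ₜ[k] b)
    = D1' φ σ b (tensorTensorTensorComm k H H H H (W.delta h ⊗ₜ[k] W.delta g)) := by
  simp only [D1', FF, wedgeOn, wbarOp, delta2, deltaT, LinearMap.comp_apply, lTensor_tmul,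
    rTensor_tmul, LinearEquiv.coe_coe, map_tmul]
  generalize W.delta h = x
  induction x using TensorProduct.induction_on with
  | zero => simp
  | add s t hs ht =>
      simp only [map_add, add_tmul, tmul_add] at *
      rw [hs, ht]
  | tmul x1 x2 =>
      generalize W.delta g = y
      induction y using TensorProduct.induction_on with
      | zero => simp
      | add s t hs ht =>
          simp only [map_add, add_tmul, tmul_add] at *
          rw [hs, ht]
      | tmul y1 y2 =>
          simp [tensorTensorTensorComm_tmul, assoc_tmul, comm_tmul, mul'_apply,
            TensorProduct.mk_apply, flip_apply]

lemma Lb' (h g : H) (b : B) :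
    wedgeOn (delta2 W) (wbar σ) (φ ∘ₗ rTensor B W.mu) ((h ⊗ₜ[k] g) ⊗ₜ[k] b)
    = D2 W φ σ b (tensorTensorTensorComm k H H H H (W.delta h ⊗ₜ[k] W.delta g)) := by
  simp only [D2, GG, wedgeOn, wbar, delta2, deltaT, LinearMap.comp_apply, lTensor_tmul,
    rTensor_tmul, LinearEquiv.coe_coe, map_tmul]
  generalize W.delta h = x
  induction x using TensorProduct.induction_on with
  | zero => simp
  | add s t hs ht =>
      simp only [map_add, add_tmul, tmul_add] at *
      rw [hs, ht]
  | tmul x1 x2 =>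
      generalize W.delta g = y
      induction y using TensorProduct.induction_on with
      | zero => simp
      | add s t hs ht =>
          simp only [map_add, add_tmul, tmul_add] at *
          rw [hs, ht]
      | tmul y1 y2 =>
          simp [tensorTensorTensorComm_tmul, assoc_tmul, mul'_apply,
            TensorProduct.mk_apply, flip_apply]

lemma Lc_gen (b : B) (x y : H ⊗[k] H) :
    D1' φ σ b (tensorTensorTensorComm k H H H H (x ⊗ₜ[k] y))
    = D1 φ σ b (tensorTensorTensorComm k H H H H
        ((TensorProduct.comm k H H x) ⊗ₜ[k] (TensorProduct.comm k H H y))) := by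
  induction x using TensorProduct.induction_on with
  | zero => simp
  | add s t hs ht =>
      simp only [map_add, add_tmul, tmul_add] at *
      rw [hs, ht]
  | tmul x1 x2 =>
      induction y using TensorProduct.induction_on with
      | zero => simp
      | add s t hs ht =>
          simp only [map_add, add_tmul, tmul_add] at *
          rw [hs, ht]
      | tmul y1 y2 =>
          simp [D1, D1', tensorTensorTensorComm_tmul, comm_tmul, mul'_apply, map_tmul]

lemma Lc (hco : Cocomm W) (b : B) (h g : H) :
    D1' φ σ b (tensorTensorTensorComm k H H H H (W.delta h ⊗ₜ[k] W.delta g))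
    = D1 φ σ b (tensorTensorTensorComm k H H H H (W.delta h ⊗ₜ[k] W.delta g)) := by
  rw [Lc_gen, hco h, hco g]

end WKAux

open WK in
theorem statement9 {k : Type} [CommRing k] {H : Type} [AddCommGroup H] [Module k H]
    {B : Type} [Ring B] [Algebra k B]
    (W : WeakHopfStr k H) (hco : Cocomm W.toWeakBialgebraStr)
    (φ : H ⊗[k] B →ₗ[k] B) (hφ : IsWMA W.toWeakBialgebraStr φ)
    (σ : H ⊗[k] H →ₗ[k] B) :
    IsTwisted W.toWeakBialgebraStr φ σ ↔
      wedgeOn (delta2 W.toWeakBialgebraStr) (wbarOp σ)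
          (φ ∘ₗ lTensor H φ ∘ₗ (TensorProduct.assoc k H H B).toLinearMap)
        = wedgeOn (delta2 W.toWeakBialgebraStr) (wbar σ)
            (φ ∘ₗ rTensor B W.toWeakBialgebraStr.mu) := by
  classical
  have hTL := WKAux.La (W := W.toWeakBialgebraStr) (φ := φ) (σ := σ)
  have hTR := WKAux.La' (W := W.toWeakBialgebraStr) (φ := φ) (σ := σ)
  have hWL := WKAux.Lb (W := W.toWeakBialgebraStr) (φ := φ) (σ := σ)
  have hWR := WKAux.Lb' (W := W.toWeakBialgebraStr) (φ := φ) (σ := σ)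
  have hC := WKAux.Lc (W := W.toWeakBialgebraStr) (φ := φ) (σ := σ) hco
  constructor
  · intro ht
    have ht' : ∀ (x y : H) (b : B),
        (LinearMap.mul' k B ∘ₗ lTensor B σ
          ∘ₗ (TensorProduct.assoc k B H H).toLinearMap
          ∘ₗ rTensor H (Pmap W.toWeakBialgebraStr φ)
          ∘ₗ (TensorProduct.assoc k H B H).symm.toLinearMap
          ∘ₗ lTensor H (Pmap W.toWeakBialgebraStr φ)) (x ⊗ₜ[k] (y ⊗ₜ[k] b))
        = (LinearMap.mul' k B ∘ₗ lTensor B φ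
          ∘ₗ (TensorProduct.assoc k B H B).toLinearMap
          ∘ₗ rTensor B (Fmap W.toWeakBialgebraStr σ)
          ∘ₗ (TensorProduct.assoc k H H B).symm.toLinearMap) (x ⊗ₜ[k] (y ⊗ₜ[k] b)) := by
      intro x y b
      exact LinearMap.congr_fun ht _
    apply TensorProduct.ext_threefold
    intro x y b
    rw [hWL, hWR, hC, ← hTL, ← hTR, ht']
  · intro hw
    have hw' : ∀ (x y : H) (b : B),
        wedgeOn (delta2 W.toWeakBialgebraStr) (wbarOp σ)
          (φ ∘ₗ lTensor H φ ∘ₗ (TensorProduct.assoc k H H B).toLinearMap)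
          ((x ⊗ₜ[k] y) ⊗ₜ[k] b)
        = wedgeOn (delta2 W.toWeakBialgebraStr) (wbar σ)
            (φ ∘ₗ rTensor B W.toWeakBialgebraStr.mu) ((x ⊗ₜ[k] y) ⊗ₜ[k] b) := by
      intro x y b
      exact LinearMap.congr_fun hw _
    apply WKAux.ext3r
    intro x y b
    rw [hTL, hTR, ← hC, ← hWL, ← hWR, hw']
end
end
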